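/- Let (φ_j) be a sequence of continuous, nonincreasing, nonnegative functions on [T₀,T] with φ_{j+1} ≤ φ_j pointwise, satisfying φ_{j+1}(t) = C₃ ∫_t^T ρ(φ_j(s)) ds for all t, where ρ : [0,∞) → [0,∞) is continuous, nondecreasing, concave, with ρ(0)=0, ρ>0 on (0,∞), and ∫_0^ε du/ρ(u) = ∞ for all ε > 0. Let φ(t) = lim_j φ_j(t) be the pointwise limit. Then φ satisfies φ(t) = C₃ ∫_t^T ρ(φ(s)) ds for all t ∈ [T₀,T], and consequently φ ≡ 0 on [T₀,T]. -/

import Mathlib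

open MeasureTheory intervalIntegral Set Filter

theorem stmt_9 (ρ : ℝ → ℝ) (φseq : ℕ → ℝ → ℝ) (φ : ℝ → ℝ) (T₀ T C₃ : ℝ)
    (hT : T₀ ≤ T) (hC₃ : 0 < C₃)
    (hρcont : Continuous ρ) (hρmono : MonotoneOn ρ (Ici 0))
    (hρconc : ConcaveOn ℝ (Ici 0) ρ) (hρ0 : ρ 0 = 0)
    (hρpos : ∀ u : ℝ, 0 < u → 0 < ρ u)
    (hOsgood : ∀ ε : ℝ, 0 < ε → ¬ IntervalIntegrable (fun u => 1 / ρ u) volume 0 ε)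
    (hcont : ∀ j : ℕ, 1 ≤ j → ContinuousOn (φseq j) (Icc T₀ T))
    (hnonneg : ∀ j : ℕ, 1 ≤ j → ∀ t ∈ Icc T₀ T, 0 ≤ φseq j t)
    (hanti : ∀ j : ℕ, 1 ≤ j → AntitoneOn (φseq j) (Icc T₀ T))
    (hdecr : ∀ j : ℕ, 1 ≤ j → ∀ t ∈ Icc T₀ T, φseq (j + 1) t ≤ φseq j t)
    (hrec : ∀ j : ℕ, 1 ≤ j → ∀ t ∈ Icc T₀ T,
        φseq (j + 1) t = C₃ * ∫ s in t..T, ρ (φseq j s))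
    (hlim : ∀ t ∈ Icc T₀ T, Tendsto (fun j => φseq j t) atTop (nhds (φ t))) :
    (∀ t ∈ Icc T₀ T, φ t = C₃ * ∫ s in t..T, ρ (φ s)) ∧
    (∀ t ∈ Icc T₀ T, φ t = 0) := by
  have hTK : T ∈ Icc T₀ T := ⟨hT, le_refl T⟩
  have hT₀K : T₀ ∈ Icc T₀ T := ⟨le_refl T₀, hT⟩
  -- monotonicity in j
  have hle : ∀ j : ℕ, 1 ≤ j → ∀ k : ℕ, ∀ t ∈ Icc T₀ T, φseq (j + k) t ≤ φseq j t := by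
    intro j hj k
    induction k with
    | zero => intro t ht; exact le_refl _
    | succ k ih =>
      intro t ht
      have h1 : φseq (j + k + 1) t ≤ φseq (j + k) t :=
        hdecr (j + k) (le_trans hj (Nat.le_add_right j k)) t ht
      exact le_trans h1 (ih t ht)
  have hφle : ∀ j : ℕ, 1 ≤ j → ∀ t ∈ Icc T₀ T, φ t ≤ φseq j t := by
    intro j hj t ht
    refine le_of_tendsto (hlim t ht) ?_
    filter_upwards [eventually_ge_atTop j] with k hk
    obtain ⟨m, rfl⟩ := Nat.exists_eq_add_of_le hk
    exact hle j hj m t ht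
  have hφnonneg : ∀ t ∈ Icc T₀ T, 0 ≤ φ t := by
    intro t ht
    refine ge_of_tendsto (hlim t ht) ?_
    filter_upwards [eventually_ge_atTop 1] with k hk
    exact hnonneg k hk t ht
  have hφanti : AntitoneOn φ (Icc T₀ T) := by
    intro s hs t ht hst
    refine le_of_tendsto_of_tendsto (hlim t ht) (hlim s hs) ?_
    filter_upwards [eventually_ge_atTop 1] with k hk
    exact hanti k hk hs ht hst
  -- uniform bound
  set M := φseq 1 T₀ with hMdef
  have hM0 : 0 ≤ M := hnonneg 1 le_rfl T₀ hT₀K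
  have hMb : ∀ j : ℕ, 1 ≤ j → ∀ s ∈ Icc T₀ T, φseq j s ≤ M := by
    intro j hj s hs
    obtain ⟨m, rfl⟩ := Nat.exists_eq_add_of_le hj
    exact le_trans (hle 1 le_rfl m s hs) (hanti 1 le_rfl hT₀K hs hs.1)
  have hρnonneg : ∀ x : ℝ, 0 ≤ x → 0 ≤ ρ x := by
    intro x hx
    calc (0:ℝ) = ρ 0 := hρ0.symm
    _ ≤ ρ x := hρmono (mem_Ici.2 le_rfl) (mem_Ici.2 hx) hx
  have hρle : ∀ x : ℝ, 0 ≤ x → x ≤ M → ρ x ≤ ρ M :=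
    fun x hx hxM => hρmono (mem_Ici.2 hx) (mem_Ici.2 hM0) hxM
  -- Part 1: limit equation
  have heq : ∀ t ∈ Icc T₀ T, φ t = C₃ * ∫ s in t..T, ρ (φ s) := by
    intro t ht
    have htT : t ≤ T := ht.2
    have hsub : Set.uIoc t T ⊆ Icc T₀ T := by
      rw [uIoc_of_le htT]
      exact (Ioc_subset_Icc_self).trans (Icc_subset_Icc ht.1 le_rfl)
    have hDCT : Tendsto (fun n : ℕ => ∫ s in t..T, ρ (φseq (n + 1) s)) atTop
        (nhds (∫ s in t..T, ρ (φ s))) := by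
      apply intervalIntegral.tendsto_integral_filter_of_dominated_convergence (fun _ => ρ M)
      · filter_upwards with n
        exact ((hρcont.comp_continuousOn ((hcont (n + 1) (by omega)).mono hsub)).mono
          subset_rfl).aestronglyMeasurable measurableSet_uIoc
      · filter_upwards with n
        refine ae_of_all _ fun x hx => ?_
        have hx' := hsub hx
        have h0 : 0 ≤ φseq (n + 1) x := hnonneg (n + 1) (by omega) x hx'
        rw [Real.norm_eq_abs, abs_of_nonneg (hρnonneg _ h0)]
        exact hρle _ h0 (hMb (n + 1) (by omega) x hx')
      · exact intervalIntegrable_const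
      · refine ae_of_all _ fun x hx => ?_
        exact (hρcont.tendsto (φ x)).comp ((hlim x (hsub hx)).comp (tendsto_add_atTop_nat 1))
    have h1 : Tendsto (fun n : ℕ => φseq (n + 2) t) atTop (nhds (φ t)) :=
      (hlim t ht).comp (tendsto_add_atTop_nat 2)
    have h2 : (fun n : ℕ => φseq (n + 2) t)
        = fun n => C₃ * ∫ s in t..T, ρ (φseq (n + 1) s) := by
      funext n
      have := hrec (n + 1) (by omega) t ht
      simpa [add_assoc] using this
    rw [h2] at h1
    exact tendsto_nhds_unique h1 (hDCT.const_mul C₃)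
  refine ⟨heq, ?_⟩
  -- properties of φ
  have hφbd : ∀ s ∈ Icc T₀ T, φ s ≤ M := fun s hs => le_trans (hφle 1 le_rfl s hs) (hMb 1 le_rfl s hs)
  have hganti : AntitoneOn (fun s => ρ (φ s)) (Icc T₀ T) := by
    intro s hs t ht hst
    exact hρmono (mem_Ici.2 (hφnonneg t ht)) (mem_Ici.2 (hφnonneg s hs)) (hφanti hs ht hst)
  have hgint : ∀ a b : ℝ, a ∈ Icc T₀ T → b ∈ Icc T₀ T →
      IntervalIntegrable (fun s => ρ (φ s)) volume a b := by
    intro a b ha hb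
    exact (hganti.mono (uIcc_subset_Icc ha hb)).intervalIntegrable
  have hgbd : ∀ x ∈ Icc T₀ T, |ρ (φ x)| ≤ ρ M := by
    intro x hx
    rw [abs_of_nonneg (hρnonneg _ (hφnonneg x hx))]
    exact hρle _ (hφnonneg x hx) (hφbd x hx)
  -- φ is Lipschitz hence continuous on Icc T₀ T
  have hφcont : ContinuousOn φ (Icc T₀ T) := by
    have hK : 0 ≤ C₃ * ρ M := mul_nonneg hC₃.le (hρnonneg M hM0)
    have hlip : LipschitzOnWith ⟨C₃ * ρ M, hK⟩ φ (Icc T₀ T) := by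
      apply LipschitzOnWith.of_dist_le_mul
      intro s hs t ht
      have hadd : (∫ x in s..t, ρ (φ x)) + (∫ x in t..T, ρ (φ x)) = ∫ x in s..T, ρ (φ x) :=
        intervalIntegral.integral_add_adjacent_intervals (hgint s t hs ht) (hgint t T ht hTK)
      have hst : φ s - φ t = C₃ * ∫ x in s..t, ρ (φ x) := by
        rw [heq s hs, heq t ht, ← hadd]; ring
      have hbnd : |∫ x in s..t, ρ (φ x)| ≤ ρ M * |t - s| := by
        rw [← Real.norm_eq_abs]
        apply intervalIntegral.norm_integral_le_of_norm_le_const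
        intro x hx
        rw [Real.norm_eq_abs]
        have hx' : x ∈ Icc T₀ T := uIcc_subset_Icc hs ht (uIoc_subset_uIcc hx)
        exact hgbd x hx'
      rw [Real.dist_eq, Real.dist_eq, hst, abs_mul, abs_of_nonneg hC₃.le]
      calc C₃ * |∫ x in s..t, ρ (φ x)| ≤ C₃ * (ρ M * |t - s|) := by
            exact mul_le_mul_of_nonneg_left hbnd hC₃.le
      _ = C₃ * ρ M * |s - t| := by rw [abs_sub_comm]; ring
    exact hlip.continuousOn
  have hφT : φ T = 0 := by
    rw [heq T hTK, intervalIntegral.integral_same, mul_zero]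
  -- Part 2: φ ≡ 0
  intro t₀ ht₀
  by_contra hne
  have ha : 0 < φ t₀ := lt_of_le_of_ne (hφnonneg t₀ ht₀) (Ne.symm hne)
  set a := φ t₀ with hadef
  have ht₀T : t₀ < T := by
    rcases lt_or_eq_of_le ht₀.2 with h | h
    · exact h
    · exact absurd (show φ t₀ = 0 by rw [h]; exact hφT) hne
  -- the function G
  set G : ℝ → ℝ := fun x => -∫ u in a..x, 1 / ρ u with hGdef
  have h1ρcontOn : ContinuousOn (fun u => 1 / ρ u) (Ioi 0) := by
    intro x hx
    exact (ContinuousAt.div continuousAt_const hρcont.continuousAt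
      (ne_of_gt (hρpos x hx))).continuousWithinAt
  have h1ρint : ∀ x y : ℝ, 0 < x → 0 < y →
      IntervalIntegrable (fun u => 1 / ρ u) volume x y := by
    intro x y hx hy
    apply ContinuousOn.intervalIntegrable
    apply h1ρcontOn.mono
    intro u hu
    exact lt_of_lt_of_le (lt_min hx hy) hu.1
  have hG' : ∀ x : ℝ, 0 < x → HasDerivAt G (-(1 / ρ x)) x := by
    intro x hx
    exact (intervalIntegral.integral_hasDerivAt_right (h1ρint a x ha hx)
      (h1ρcontOn.stronglyMeasurableAtFilter isOpen_Ioi x hx)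
      (h1ρcontOn.continuousAt (isOpen_Ioi.mem_nhds hx))).neg
  have hGcont : ContinuousOn G (Ioi 0) := fun x hx => ((hG' x hx).continuousAt).continuousWithinAt
  -- the first zero t₁ of φ after t₀
  set S : Set ℝ := Icc t₀ T ∩ φ ⁻¹' {0} with hSdef
  have hScl : IsClosed S :=
    ContinuousOn.preimage_isClosed_of_isClosed (hφcont.mono (Icc_subset_Icc ht₀.1 le_rfl))
      isClosed_Icc isClosed_singleton
  have hSne : S.Nonempty := ⟨T, ⟨ht₀T.le, le_rfl⟩, hφT⟩
  have hSbdd : BddBelow S := ⟨t₀, fun x hx => hx.1.1⟩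
  set t₁ := sInf S with ht₁def
  have ht₁S : t₁ ∈ S := hScl.csInf_mem hSne hSbdd
  have hφt₁ : φ t₁ = 0 := ht₁S.2
  have ht₁Icc : t₁ ∈ Icc t₀ T := ht₁S.1
  have ht₀t₁ : t₀ < t₁ := by
    rcases lt_or_eq_of_le ht₁Icc.1 with h | h
    · exact h
    · exact absurd (h ▸ hφt₁ : φ t₀ = 0) (ne_of_gt ha)
  have hIccsub : Icc t₀ t₁ ⊆ Icc T₀ T := Icc_subset_Icc ht₀.1 (le_trans ht₁Icc.2 hTK.2)
  have hφpos : ∀ t : ℝ, t₀ ≤ t → t < t₁ → 0 < φ t := by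
    intro t htl htr
    have htIcc : t ∈ Icc T₀ T := hIccsub ⟨htl, htr.le⟩
    rcases lt_or_eq_of_le (hφnonneg t htIcc) with h | h
    · exact h
    · exfalso
      have : t ∈ S := ⟨⟨htl, le_trans htr.le ht₁Icc.2⟩, h.symm⟩
      exact absurd (csInf_le hSbdd this) (not_le.2 htr)
  -- derivative of φ on (t₀, t₁)
  have hφ' : ∀ t ∈ Ioo t₀ t₁, HasDerivAt φ (-(C₃ * ρ (φ t))) t := by
    intro t htm
    have htI : t ∈ Ioo T₀ T :=
      ⟨lt_of_le_of_lt ht₀.1 htm.1, lt_of_lt_of_le htm.2 ht₁Icc.2⟩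
    have htIcc : t ∈ Icc T₀ T := ⟨htI.1.le, htI.2.le⟩
    have hgcontOn : ContinuousOn (fun s => ρ (φ s)) (Ioo T₀ T) :=
      (hρcont.comp_continuousOn hφcont).mono Ioo_subset_Icc_self
    have hF : HasDerivAt (fun u => ∫ x in T..u, ρ (φ x)) (ρ (φ t)) t :=
      intervalIntegral.integral_hasDerivAt_right (hgint T t hTK htIcc)
        (hgcontOn.stronglyMeasurableAtFilter isOpen_Ioo t htI)
        (hgcontOn.continuousAt (isOpen_Ioo.mem_nhds htI))
    have hF2 : HasDerivAt (fun u => C₃ * -∫ x in T..u, ρ (φ x)) (C₃ * -ρ (φ t)) t :=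
      hF.neg.const_mul C₃
    have hev : φ =ᶠ[nhds t] fun u => C₃ * -∫ x in T..u, ρ (φ x) := by
      filter_upwards [isOpen_Ioo.mem_nhds htI] with u hu
      rw [heq u ⟨hu.1.le, hu.2.le⟩, intervalIntegral.integral_symm]
    have := hF2.congr_of_eventuallyEq hev
    have e : -(C₃ * ρ (φ t)) = C₃ * -ρ (φ t) := by ring
    rw [e]; exact this
  -- derivative of G ∘ φ
  have hh' : ∀ t ∈ Ioo t₀ t₁, HasDerivAt (fun u => G (φ u)) C₃ t := by
    intro t htm
    have hpos : 0 < φ t := hφpos t htm.1.le htm.2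
    have := (hG' (φ t) hpos).comp t (hφ' t htm)
    have hne' : ρ (φ t) ≠ 0 := ne_of_gt (hρpos _ hpos)
    have e : -(1 / ρ (φ t)) * -(C₃ * ρ (φ t)) = C₃ := by
      rw [neg_mul_neg, one_div, inv_mul_eq_div, mul_div_assoc, div_self hne', mul_one]
    rw [e] at this; exact this
  -- key bound via MVT
  set s₀ := (t₀ + t₁) / 2 with hs₀def
  have hs₀m : s₀ ∈ Ioo t₀ t₁ := ⟨by linarith, by linarith⟩
  set a' := φ s₀ with ha'def
  have ha' : 0 < a' := hφpos s₀ hs₀m.1.le hs₀m.2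
  have ha'a : a' ≤ a := hφanti ht₀ (hIccsub ⟨hs₀m.1.le, hs₀m.2.le⟩) hs₀m.1.le
  have hkey : ∀ t ∈ Ioo s₀ t₁, G (φ t) ≤ G a' + C₃ * (T - T₀) := by
    intro t htm
    have hst : s₀ < t := htm.1
    have hIcc2 : Icc s₀ t ⊆ Icc T₀ T :=
      (Icc_subset_Icc hs₀m.1.le htm.2.le).trans hIccsub
    have hmaps : ∀ u ∈ Icc s₀ t, φ u ∈ Ioi (0:ℝ) := by
      intro u hu
      exact hφpos u (le_trans hs₀m.1.le hu.1) (lt_of_le_of_lt hu.2 htm.2)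
    have hcomp : ContinuousOn (fun u => G (φ u)) (Icc s₀ t) :=
      hGcont.comp (hφcont.mono hIcc2) hmaps
    have hderiv : ∀ u ∈ Ioo s₀ t, HasDerivAt (fun u => G (φ u)) C₃ u := by
      intro u hu
      exact hh' u ⟨lt_trans hs₀m.1 hu.1, lt_trans hu.2 htm.2⟩
    obtain ⟨c, _, hc⟩ := exists_hasDerivAt_eq_slope (fun u => G (φ u)) (fun _ => C₃)
      hst hcomp hderiv
    have heqt : G (φ t) = G a' + C₃ * (t - s₀) := by
      have hne2 : t - s₀ ≠ 0 := ne_of_gt (by linarith)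
      field_simp at hc
      linarith [hc]
    rw [heqt]
    have h1 : t - s₀ ≤ T - T₀ := by
      have h2 := hIcc2 ⟨le_rfl, hst.le⟩
      have h3 := hIcc2 ⟨hst.le, le_rfl⟩
      linarith [h2.1, h3.2]
    nlinarith [hC₃.le]
  -- bound on the Osgood integral
  have hBnn : 0 ≤ C₃ * (T - T₀) := mul_nonneg hC₃.le (by linarith)
  have hbound : ∀ x : ℝ, 0 < x → x ≤ a' → (∫ u in x..a', 1 / ρ u) ≤ C₃ * (T - T₀) := by
    intro x hx hxa'
    have hs₀t₁ : s₀ ≤ t₁ := hs₀m.2.le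
    have hIcc3 : Icc s₀ t₁ ⊆ Icc T₀ T := (Icc_subset_Icc hs₀m.1.le le_rfl).trans hIccsub
    have hIVT : x ∈ φ '' Icc s₀ t₁ := by
      apply intermediate_value_Icc' hs₀t₁ (hφcont.mono hIcc3)
      exact ⟨by rw [hφt₁]; exact hx.le, hxa'⟩
    obtain ⟨t, htmem, htx⟩ := hIVT
    have hGdiff : (∫ u in x..a', 1 / ρ u) = G x - G a' := by
      have hadd : (∫ u in a..x, 1 / ρ u) + (∫ u in x..a', 1 / ρ u) = ∫ u in a..a', 1 / ρ u :=
        intervalIntegral.integral_add_adjacent_intervals (h1ρint a x ha hx) (h1ρint x a' hx ha')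
      simp only [hGdef]
      linarith [hadd]
    rcases lt_or_eq_of_le htmem.1 with hst | hst
    · have htlt : t < t₁ := by
        rcases lt_or_eq_of_le htmem.2 with h | h
        · exact h
        · exfalso; rw [h, hφt₁] at htx; exact absurd htx.symm (ne_of_gt hx)
      have := hkey t ⟨hst, htlt⟩
      rw [htx] at this
      rw [hGdiff]
      linarith
    · rw [← hst] at htx
      have hxa : x = a' := htx.symm ▸ rfl
      rw [hxa, intervalIntegral.integral_same]
      exact hBnn
  -- contradiction with the Osgood condition
  apply hOsgood a' ha'
  rw [intervalIntegrable_iff_integrableOn_Ioc_of_le ha'.le]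
  have haseq : Tendsto (fun n : ℕ => a' / (n + 1 : ℝ)) atTop (nhds 0) := by
    have h := (tendsto_const_div_atTop_nhds_zero_nat a').comp (tendsto_add_atTop_nat 1)
    have heq2 : (fun n : ℕ => a' / (n + 1 : ℝ)) = (fun n : ℕ => a' / (n : ℝ)) ∘ (fun n => n + 1) := by
      funext n
      simp only [Function.comp_apply]
      norm_cast
    rw [heq2]
    exact h
  have hanpos : ∀ n : ℕ, 0 < a' / (n + 1 : ℝ) := by
    intro n
    positivity
  have hanle : ∀ n : ℕ, a' / (n + 1 : ℝ) ≤ a' := by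
    intro n
    apply div_le_self ha'.le
    have : (0:ℝ) ≤ (n:ℝ) := Nat.cast_nonneg n
    linarith
  apply MeasureTheory.integrableOn_Ioc_of_intervalIntegral_norm_bounded_left
    (a := fun n : ℕ => a' / (n + 1 : ℝ)) (I := C₃ * (T - T₀)) ?_ haseq ?_
  · intro n
    exact ((h1ρint (a' / (n + 1 : ℝ)) a' (hanpos n) ha').1)
  · refine Eventually.of_forall fun n => ?_
    have h1 : (∫ u in Ioc (a' / (n + 1 : ℝ)) a', ‖1 / ρ u‖) = ∫ u in Ioc (a' / (n + 1 : ℝ)) a', 1 / ρ u := by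
      apply setIntegral_congr_fun measurableSet_Ioc
      intro u hu
      have hu0 : 0 < u := lt_trans (hanpos n) hu.1
      simp only [Real.norm_eq_abs]
      rw [abs_of_nonneg (le_of_lt (div_pos one_pos (hρpos u hu0)))]
    rw [h1, ← intervalIntegral.integral_of_le (hanle n)]
    exact hbound _ (hanpos n) (hanle n)
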